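/- arXiv:2603.14233 — 4 statements merged into one kernel-verified Lean document; each statement's English description precedes it below -/
import Mathlib

section
/- Let $R_1, \dots, R_{n+1}$ be distinct real numbers with nonnegative weights $\omega_1,\dots,\omega_{n+1}$ summing to 1, and suppose the random test index $J$ satisfies $\mathbb{P}(J = k) = \omega_k$ conditional on the multiset of scores. If the scores have a continuous distribution (so ties occur with probability zero), then the probability that the test score $R_J$ is at most the weighted $(1-\alpha)$-quantile of $\sum_{k=1}^{n+1}\omega_k \delta_{R_k}$ is at most $1 - \alpha + \omega_{\max}$, where $\omega_{\max} = \max_k \omega_k$. -/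
open MeasureTheory

/-- full conformal upper coverage bound.  With distinct scores
`R 1 < … ` (ties have probability zero by continuity, so the scores are
distinct), nonnegative weights summing to 1, and a random test index `J` with
`ℙ(J = k) = ω k` given the multiset of scores, the probability that the test
score `R J` is at most the weighted `(1-α)`-quantile of `∑ ω k δ_{R k}` is at
most `1 - α + ω_max`. -/
theorem weighted_conformal_upper_coverage {Ω : Type*} [MeasurableSpace Ω]
    (P : Measure Ω) [IsProbabilityMeasure P]
    (n : ℕ) (R : Fin (n + 1) → ℝ) (hR : Function.Injective R)
    (J : Ω → Fin (n + 1))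
    (ω : Fin (n + 1) → ℝ) (hω0 : ∀ k, 0 ≤ ω k) (hω1 : ∑ k, ω k = 1)
    (hJ : ∀ k, P {x | J x = k} = ENNReal.ofReal (ω k))
    (α : ℝ) (hα : α ∈ Set.Ioo (0 : ℝ) 1) :
    P {x | R (J x) ≤ sInf {t : ℝ | 1 - α ≤ ∑ k, if R k ≤ t then ω k else 0}} ≤
      ENNReal.ofReal (1 - α + Finset.univ.sup' Finset.univ_nonempty ω) := by
  obtain ⟨hα0, hα1⟩ := hα
  set f : ℝ → ℝ := fun t => ∑ k, if R k ≤ t then ω k else 0 with hf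
  set T : Set ℝ := {t : ℝ | 1 - α ≤ f t} with hT
  set Q : ℝ := sInf T with hQdef
  have hfilt : ∀ t, f t = ∑ k ∈ Finset.univ.filter (fun k => R k ≤ t), ω k := by
    intro t; rw [Finset.sum_filter]
  -- the sup of R is in T
  set M : ℝ := Finset.univ.sup' Finset.univ_nonempty R with hM
  have hMT : M ∈ T := by
    have : f M = 1 := by
      rw [← hω1, hf]
      refine Finset.sum_congr rfl fun k _ => ?_
      rw [if_pos (Finset.le_sup' R (Finset.mem_univ k))]
    simp only [hT, Set.mem_setOf_eq, this]
    linarith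
  -- T is bounded below by inf R
  set m : ℝ := Finset.univ.inf' Finset.univ_nonempty R with hm
  have hbdd : BddBelow T := by
    refine ⟨m, fun t ht => ?_⟩
    by_contra hlt
    push_neg at hlt
    have : f t = 0 := by
      rw [hf]
      refine Finset.sum_eq_zero fun k _ => ?_
      rw [if_neg]
      intro h
      exact absurd (le_trans (Finset.inf'_le R (Finset.mem_univ k)) h) (not_le.2 hlt)
    simp only [hT, Set.mem_setOf_eq, this] at ht
    linarith
  have hTne : T.Nonempty := ⟨M, hMT⟩
  -- Q ∈ T
  have hQT : Q ∈ T := by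
    by_contra hnot
    simp only [hT, Set.mem_setOf_eq, not_le] at hnot
    set U : Finset (Fin (n+1)) := Finset.univ.filter (fun k => Q < R k) with hU
    rcases U.eq_empty_or_nonempty with hUe | hUne
    · have : f Q = 1 := by
        rw [← hω1, hf]
        refine Finset.sum_congr rfl fun k _ => ?_
        rw [if_pos]
        by_contra h
        have : k ∈ U := by simp [hU, lt_of_not_ge h]
        simp [hUe] at this
      linarith
    · set u : ℝ := U.inf' hUne R with hu
      have hQu : Q < u := by
        rw [hu, Finset.lt_inf'_iff]
        intro k hk
        simpa [hU] using hk
      have : u ≤ Q := by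
        refine le_csInf hTne fun t ht => ?_
        by_contra hlt
        push_neg at hlt
        have hsub : (Finset.univ.filter (fun k => R k ≤ t)) ⊆
            (Finset.univ.filter (fun k => R k ≤ Q)) := by
          intro k hk
          simp only [Finset.mem_filter, Finset.mem_univ, true_and] at hk ⊢
          by_contra h
          have hkU : k ∈ U := by simp [hU, lt_of_not_ge h]
          exact absurd (le_trans (Finset.inf'_le R hkU) hk) (not_le.2 hlt)
        have hle : f t ≤ f Q := by
          rw [hfilt, hfilt]
          exact Finset.sum_le_sum_of_subset_of_nonneg hsub (fun k _ _ => hω0 k)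
        simp only [hT, Set.mem_setOf_eq] at ht
        linarith
      linarith
  -- there is k0 with R k0 = Q
  set G : Finset (Fin (n+1)) := Finset.univ.filter (fun k => R k < Q) with hG
  have hk0 : ∃ k0, R k0 = Q := by
    by_contra hne
    push_neg at hne
    rcases G.eq_empty_or_nonempty with hGe | hGne
    · have : f Q = 0 := by
        rw [hf]
        refine Finset.sum_eq_zero fun k _ => ?_
        rw [if_neg]
        intro h
        rcases lt_or_eq_of_le h with h' | h'
        · have : k ∈ G := by simp [hG, h']
          simp [hGe] at this
        · exact hne k h'
      simp only [hT, Set.mem_setOf_eq, this] at hQT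
      linarith
    · set g : ℝ := G.sup' hGne R with hg
      have hgQ : g < Q := by
        rw [hg, Finset.sup'_lt_iff]
        intro k hk
        simpa [hG] using hk
      have hfg : f g = f Q := by
        rw [hfilt, hfilt]
        refine Finset.sum_congr ?_ (fun _ _ => rfl)
        ext k
        simp only [Finset.mem_filter, Finset.mem_univ, true_and]
        constructor
        · intro h; exact h.trans hgQ.le
        · intro h
          rcases lt_or_eq_of_le h with h' | h'
          · exact Finset.le_sup' R (by simp [hG, h'])
          · exact absurd h' (hne k)
      have : g ∈ T := by
        simp only [hT, Set.mem_setOf_eq, hfg]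
        exact hQT
      have := csInf_le hbdd this
      linarith
  obtain ⟨k0, hk0⟩ := hk0
  -- sum over {R k < Q} is ≤ 1 - α
  have hGsum : ∑ k ∈ G, ω k ≤ 1 - α := by
    rcases G.eq_empty_or_nonempty with hGe | hGne
    · rw [hGe, Finset.sum_empty]; linarith
    · set g : ℝ := G.sup' hGne R with hg
      have hgQ : g < Q := by
        rw [hg, Finset.sup'_lt_iff]
        intro k hk
        simpa [hG] using hk
      have hgT : g ∉ T := fun h => absurd (csInf_le hbdd h) (not_le.2 hgQ)
      simp only [hT, Set.mem_setOf_eq, not_le] at hgT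
      have hfg : f g = ∑ k ∈ G, ω k := by
        rw [hfilt]
        refine Finset.sum_congr ?_ (fun _ _ => rfl)
        ext k
        simp only [hG, Finset.mem_filter, Finset.mem_univ, true_and]
        constructor
        · intro h; exact lt_of_le_of_lt h hgQ
        · intro h; exact Finset.le_sup' R (by simp [hG, h])
      linarith
  -- decompose the filter at Q
  have hsplit : Finset.univ.filter (fun k => R k ≤ Q) = insert k0 G := by
    ext k
    simp only [hG, Finset.mem_filter, Finset.mem_univ, true_and, Finset.mem_insert]
    constructor
    · intro h
      rcases lt_or_eq_of_le h with h' | h'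
      · exact Or.inr (by simp [hG, h'])
      · exact Or.inl (hR (h'.trans hk0.symm))
    · rintro (rfl | h)
      · exact le_of_eq hk0
      · exact h.le
  have hk0G : k0 ∉ G := by
    simp only [hG, Finset.mem_filter, Finset.mem_univ, true_and]
    exact not_lt.2 hk0.ge
  have hfQ : f Q ≤ 1 - α + Finset.univ.sup' Finset.univ_nonempty ω := by
    rw [hfilt, hsplit, Finset.sum_insert hk0G]
    have := Finset.le_sup' ω (Finset.mem_univ k0)
    linarith
  -- measure computation
  have hsetsub : {x | R (J x) ≤ Q} ⊆
      ⋃ k ∈ Finset.univ.filter (fun k => R k ≤ Q), {x | J x = k} := by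
    intro x hx
    simp only [Set.mem_setOf_eq] at hx
    exact Set.mem_biUnion (Finset.mem_filter.2 ⟨Finset.mem_univ _, hx⟩) rfl
  calc P {x | R (J x) ≤ Q} ≤
      ∑ k ∈ Finset.univ.filter (fun k => R k ≤ Q), P {x | J x = k} :=
        le_trans (measure_mono hsetsub) (measure_biUnion_finset_le _ _)
    _ = ∑ k ∈ Finset.univ.filter (fun k => R k ≤ Q), ENNReal.ofReal (ω k) := by
        refine Finset.sum_congr rfl fun k _ => hJ k
    _ = ENNReal.ofReal (∑ k ∈ Finset.univ.filter (fun k => R k ≤ Q), ω k) :=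
        (ENNReal.ofReal_sum_of_nonneg (fun k _ => hω0 k)).symm
    _ ≤ ENNReal.ofReal (1 - α + Finset.univ.sup' Finset.univ_nonempty ω) := by
        apply ENNReal.ofReal_le_ofReal
        rw [← hfilt]
        exact hfQ
end

section
/- Let $R_1,\dots,R_n$ be real scores with weights $\omega_1,\dots,\omega_n \ge 0$ and an extra test weight $\omega_{test} \ge 0$ with $\sum_i \omega_i + \omega_{test} = 1$. Define $q^* = \mathrm{Quantile}_{1-\alpha}(\sum_i \omega_i \delta_{R_i} + \omega_{test}\delta_{+\infty})$. Then for any real value $r$ and any weights $\omega'_1,\dots,\omega'_n,\omega'_{test} \ge 0$ with $\omega'_{test} \le \omega_{test}$, $\omega'_i \ge \omega_i$ for all $i$, and $\sum_i \omega'_i + \omega'_{test} = 1$, the quantile $\mathrm{Quantile}_{1-\alpha}(\sum_i \omega'_i \delta_{R_i} + \omega'_{test}\delta_{r})$ is at most $q^*$. In particular, replacing the point mass at $+\infty$ by a point mass at any finite value $r$ can only decrease the $(1-\alpha)$-quantile. -/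
/-- one-shot weighting monotonicity.  Let
`q* = Quantile_{1-α}(∑ ω_i δ_{R_i} + ω_test δ_{+∞})` (the point mass at `+∞`
contributes no mass to any interval `(-∞,t]`, `t` finite).  If the weights are
reallocated so that `ω'_i ≥ ω_i` for all `i` and `ω'_test ≤ ω_test`, with total
mass still 1 and the test mass now placed at an arbitrary finite value `r`,
then the resulting `(1-α)`-quantile is at most `q*`.  Quantiles are taken in
the extended reals, with `sInf ∅ = ⊤`. -/
theorem one_shot_quantile_upper_bound (n : ℕ) (α : ℝ) (hα : α ∈ Set.Ioo (0 : ℝ) 1)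
    (R : Fin n → ℝ) (ω ω' : Fin n → ℝ) (ωtest ωtest' : ℝ) (r : ℝ)
    (h0 : ∀ i, 0 ≤ ω i) (h0' : ∀ i, 0 ≤ ω' i)
    (ht : 0 ≤ ωtest) (ht' : 0 ≤ ωtest')
    (hsum : (∑ i, ω i) + ωtest = 1) (hsum' : (∑ i, ω' i) + ωtest' = 1)
    (hmono : ∀ i, ω i ≤ ω' i) (htest : ωtest' ≤ ωtest) :
    sInf {t : EReal | 1 - α ≤ (∑ i, if (R i : EReal) ≤ t then ω' i else 0)
        + (if (r : EReal) ≤ t then ωtest' else 0)} ≤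
      sInf {t : EReal | 1 - α ≤ ∑ i, if (R i : EReal) ≤ t then ω i else 0} := by
  apply sInf_le_sInf
  intro t htm
  simp only [Set.mem_setOf_eq] at *
  have h1 : (∑ i, if (R i : EReal) ≤ t then ω i else 0)
      ≤ ∑ i, if (R i : EReal) ≤ t then ω' i else 0 := by
    apply Finset.sum_le_sum
    intro i _
    by_cases h : (R i : EReal) ≤ t <;> simp [h, hmono i, le_refl]
  have h2 : (0:ℝ) ≤ if (r : EReal) ≤ t then ωtest' else 0 := by
    by_cases h : (r : EReal) ≤ t <;> simp [h, ht']
  linarith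
end

section
/- Let $J$ be a random index in $\{1,\dots,n+1\}$ with $\mathbb{P}(J=k) = \omega_k$, where $\omega_k > 0$ sum to 1, and let $r_1,\dots,r_{n+1}$ be distinct reals. Let $q = \mathrm{Quantile}_{1-\alpha}(\sum_k \omega_k \delta_{r_k})$. Then $1 - \alpha \le \mathbb{P}(r_J \le q) \le 1 - \alpha + \omega_{\max}$, where $\omega_{\max} = \max_k \omega_k$. -/
/-!
Write `F t = ∑_{r k ≤ t} ω k`. Summing the point masses `P {J = k}` gives `P (r J ≤ t) = F t`; this
needs no measurability of `J`, since these masses already add up to `P univ`. As `F` is upper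
semicontinuous, the infimum `q` of `{t | 1 - α ≤ F t}` belongs to the set, so `1 - α ≤ F q`.
Just below `q` we have `F < 1 - α`, and as the scores are distinct, `F` jumps at `q` by a single
weight, at most `ω_max`.
-/

open MeasureTheory

theorem measure_preimage_finset_eq_sum {Ω ι : Type*} [MeasurableSpace Ω] [Fintype ι]
    (μ : Measure Ω) [IsFiniteMeasure μ] (f : Ω → ι)
    (hf : ∑ k, μ (f ⁻¹' {k}) ≤ μ Set.univ) (s : Finset ι) :
    μ (f ⁻¹' s) = ∑ k ∈ s, μ (f ⁻¹' {k}) := by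
  classical
  have hle (u : Finset ι) : μ (f ⁻¹' u) ≤ ∑ k ∈ u, μ (f ⁻¹' {k}) := by
    rw [← Set.biUnion_preimage_singleton]
    exact measure_biUnion_finset_le u _
  refine le_antisymm (hle s) (ENNReal.le_of_add_le_add_right (a := ∑ k ∈ sᶜ, μ (f ⁻¹' {k}))
    (ENNReal.sum_ne_top.2 fun k _ => measure_ne_top μ _) ?_)
  calc ∑ k ∈ s, μ (f ⁻¹' {k}) + ∑ k ∈ sᶜ, μ (f ⁻¹' {k})
      = ∑ k, μ (f ⁻¹' {k}) := Finset.sum_add_sum_compl s _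
    _ ≤ μ Set.univ := hf
    _ ≤ μ (f ⁻¹' s) + μ (f ⁻¹' s)ᶜ := measure_univ_le_add_compl _
    _ ≤ μ (f ⁻¹' s) + ∑ k ∈ sᶜ, μ (f ⁻¹' {k}) := by
      rw [← Set.preimage_compl, ← Finset.coe_compl]
      exact add_le_add le_rfl (hle _)

theorem exists_lt_forall_notMem_Ioo {ι : Type*} [Finite ι] (r : ι → ℝ) (q : ℝ) :
    ∃ t < q, ∀ k, r k ∉ Set.Ioo t q := by
  have hk (k : ι) : ∀ᶠ t in nhdsWithin q (Set.Iio q), r k ∉ Set.Ioo t q := by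
    by_cases hkq : r k < q
    · filter_upwards [Ioo_mem_nhdsLT hkq] with t ht hmem
      exact (lt_asymm ht.1 hmem.1).elim
    · exact Filter.Eventually.of_forall fun t hmem => hkq hmem.2
  exact ((Filter.eventually_all.2 hk).and self_mem_nhdsWithin).exists.imp
    fun t ht => ⟨ht.2, ht.1⟩

section WeightedQuantile

variable {ι : Type*} [Fintype ι] (ω r : ι → ℝ)

noncomputable def weightedCDF (t : ℝ) : ℝ := ∑ k, if r k ≤ t then ω k else 0

/-- `Quantile_β (∑ k, ω k • δ (r k))`, `weightedCDF ω r` being the distribution function of this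
measure. Without `0 < β ≤ ∑ k, ω k` the set may be empty or unbounded below, and `sInf` is junk. -/
noncomputable def weightedQuantile (β : ℝ) : ℝ := sInf {t | β ≤ weightedCDF ω r t}

variable {ω r}

theorem weightedCDF_eq_sum_filter (t : ℝ) :
    weightedCDF ω r t = ∑ k with r k ≤ t, ω k :=
  (Finset.sum_filter _ _).symm

theorem upperSemicontinuous_weightedCDF (hω : ∀ k, 0 ≤ ω k) :
    UpperSemicontinuous (weightedCDF ω r) := by
  have hind : weightedCDF ω r = fun t => ∑ k, (Set.Ici (r k)).indicator (fun _ => ω k) t := by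
    funext t
    simp only [weightedCDF, Set.indicator_apply, Set.mem_Ici]
  rw [hind]
  exact upperSemicontinuous_sum fun k _ => isClosed_Ici.upperSemicontinuous_indicator (hω k)

theorem exists_le_of_pos_weightedCDF {t : ℝ} (ht : 0 < weightedCDF ω r t) : ∃ k, r k ≤ t := by
  by_contra! h
  simp [weightedCDF, fun k => not_le.2 (h k)] at ht

theorem weightedCDF_of_forall_le {t : ℝ} (ht : ∀ k, r k ≤ t) :
    weightedCDF ω r t = ∑ k, ω k := by
  simp [weightedCDF, ht]

theorem bddBelow_setOf_le_weightedCDF {β : ℝ} (hβ : 0 < β) :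
    BddBelow {t | β ≤ weightedCDF ω r t} := by
  obtain ⟨m, hm⟩ := (Set.finite_range r).bddBelow
  refine ⟨m, fun t ht => ?_⟩
  obtain ⟨k, hk⟩ := exists_le_of_pos_weightedCDF (hβ.trans_le ht)
  exact (hm (Set.mem_range_self k)).trans hk

theorem nonempty_setOf_le_weightedCDF {β : ℝ} (hβ : β ≤ ∑ k, ω k) :
    {t | β ≤ weightedCDF ω r t}.Nonempty := by
  obtain ⟨M, hM⟩ := (Set.finite_range r).bddAbove
  exact ⟨M, by rwa [Set.mem_ofPred_eq, weightedCDF_of_forall_le fun k => hM (Set.mem_range_self k)]⟩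

theorem le_weightedCDF_weightedQuantile (hω : ∀ k, 0 ≤ ω k) {β : ℝ} (hβ0 : 0 < β)
    (hβ1 : β ≤ ∑ k, ω k) : β ≤ weightedCDF ω r (weightedQuantile ω r β) :=
  ((upperSemicontinuous_weightedCDF hω).isClosed_preimage β).csInf_mem
    (nonempty_setOf_le_weightedCDF hβ1) (bddBelow_setOf_le_weightedCDF hβ0)

theorem weightedCDF_lt_of_lt_weightedQuantile {β t : ℝ} (hβ : 0 < β)
    (ht : t < weightedQuantile ω r β) : weightedCDF ω r t < β :=
  not_le.1 (notMem_of_lt_csInf (s := {t | β ≤ weightedCDF ω r t}) ht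
    (bddBelow_setOf_le_weightedCDF hβ))

theorem exists_lt_weightedCDF_le_add_sup' [Nonempty ι] (hω : ∀ k, 0 ≤ ω k)
    (hr : Function.Injective r) (q : ℝ) :
    ∃ t < q, weightedCDF ω r q ≤ weightedCDF ω r t + Finset.univ.sup' Finset.univ_nonempty ω := by
  obtain ⟨t, htq, hgap⟩ := exists_lt_forall_notMem_Ioo r q
  have hsplit (k : ι) : (if r k ≤ q then ω k else 0) =
      (if r k ≤ t then ω k else 0) + if r k = q then ω k else 0 := by
    have := hgap k
    grind
  have hatom : ∑ k, (if r k = q then ω k else 0) ≤ Finset.univ.sup' Finset.univ_nonempty ω := by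
    by_cases h : ∃ j, r j = q
    · obtain ⟨j, rfl⟩ := h
      rw [Finset.sum_eq_single j (fun k _ hkj => if_neg (hr.ne hkj)) (by simp), if_pos rfl]
      exact Finset.le_sup' ω (Finset.mem_univ j)
    · rw [not_exists] at h
      simp only [h, if_false, Finset.sum_const_zero]
      exact (hω _).trans (Finset.le_sup' ω (Finset.mem_univ (Classical.arbitrary ι)))
  refine ⟨t, htq, ?_⟩
  calc weightedCDF ω r q = weightedCDF ω r t + ∑ k, (if r k = q then ω k else 0) := by
        simp only [weightedCDF, hsplit, Finset.sum_add_distrib]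
    _ ≤ _ := add_le_add le_rfl hatom

theorem weightedCDF_weightedQuantile_le_add_sup' [Nonempty ι] (hω : ∀ k, 0 ≤ ω k)
    (hr : Function.Injective r) {β : ℝ} (hβ : 0 < β) :
    weightedCDF ω r (weightedQuantile ω r β) ≤ β + Finset.univ.sup' Finset.univ_nonempty ω := by
  obtain ⟨t, htq, hle⟩ := exists_lt_weightedCDF_le_add_sup' hω hr (weightedQuantile ω r β)
  linarith [weightedCDF_lt_of_lt_weightedQuantile hβ htq]

theorem measure_setOf_comp_le_eq_ofReal_weightedCDF {Ω : Type*} [MeasurableSpace Ω]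
    (P : Measure Ω) [IsProbabilityMeasure P] (J : Ω → ι) (hω0 : ∀ k, 0 ≤ ω k)
    (hω1 : ∑ k, ω k = 1) (hJ : ∀ k, P {x | J x = k} = ENNReal.ofReal (ω k)) (t : ℝ) :
    P {x | r (J x) ≤ t} = ENNReal.ofReal (weightedCDF ω r t) := by
  have hsum : ∑ k, P (J ⁻¹' {k}) ≤ P Set.univ := by
    simp only [Set.preimage, Set.mem_singleton_iff, hJ]
    rw [← ENNReal.ofReal_sum_of_nonneg fun k _ => hω0 k, hω1, ENNReal.ofReal_one, measure_univ]
  calc P {x | r (J x) ≤ t} = P (J ⁻¹' ↑(Finset.univ.filter fun k => r k ≤ t)) := by simp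
    _ = ∑ k with r k ≤ t, P {x | J x = k} := measure_preimage_finset_eq_sum P J hsum _
    _ = ENNReal.ofReal (weightedCDF ω r t) := by
      rw [weightedCDF_eq_sum_filter, ENNReal.ofReal_sum_of_nonneg fun k _ => hω0 k]
      exact Finset.sum_congr rfl fun k _ => hJ k

end WeightedQuantile

/-- two-sided finite-sample guarantee for weighted conformal
quantiles with distinct scores: if `ℙ(J = k) = ω k` with positive weights
summing to 1, distinct reals `r k`, and
`q = Quantile_{1-α}(∑ ω k δ_{r k})`, then
`1 - α ≤ ℙ(r J ≤ q) ≤ 1 - α + ω_max`. -/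
theorem weighted_conformal_two_sided {Ω : Type*} [MeasurableSpace Ω]
    (P : Measure Ω) [IsProbabilityMeasure P]
    (n : ℕ) (J : Ω → Fin (n + 1))
    (ω : Fin (n + 1) → ℝ) (hω0 : ∀ k, 0 < ω k) (hω1 : ∑ k, ω k = 1)
    (hJ : ∀ k, P {x | J x = k} = ENNReal.ofReal (ω k))
    (r : Fin (n + 1) → ℝ) (hr : Function.Injective r)
    (α : ℝ) (hα : α ∈ Set.Ioo (0 : ℝ) 1)
    (q : ℝ) (hq : q = sInf {t : ℝ | 1 - α ≤ ∑ k, if r k ≤ t then ω k else 0}) :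
    ENNReal.ofReal (1 - α) ≤ P {x | r (J x) ≤ q} ∧
    P {x | r (J x) ≤ q} ≤
      ENNReal.ofReal (1 - α + Finset.univ.sup' Finset.univ_nonempty ω) := by
  obtain ⟨hα0, hα1⟩ := hα
  have hω : ∀ k, 0 ≤ ω k := fun k => (hω0 k).le
  have hq' : q = weightedQuantile ω r (1 - α) := hq
  rw [measure_setOf_comp_le_eq_ofReal_weightedCDF P J hω hω1 hJ, hq']
  exact ⟨ENNReal.ofReal_le_ofReal (le_weightedCDF_weightedQuantile hω (by linarith) (by linarith)),
    ENNReal.ofReal_le_ofReal (weightedCDF_weightedQuantile_le_add_sup' hω hr (by linarith))⟩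
end

section
/- Let $\mu, \nu$ be probability measures on $\mathbb{R}$ with $d_{TV}(\mu,\nu) \le \epsilon$, and let $Y$ be a random variable. If $\mathbb{P}(Y \le \mathrm{Quantile}_{1-\alpha'}(\nu)) \ge 1-\alpha'$ for every $\alpha' \in (0,1)$ in the sense of a conformal guarantee with ideal measure $\nu$, then using the threshold $\hat q = \mathrm{Quantile}_{1-\alpha}(\mu)$ gives $\mathbb{P}(Y \le \hat q) \ge 1 - \alpha - \epsilon$, provided $\alpha + \epsilon < 1$. -/
open MeasureTheory

/-- coverage degradation under total variation perturbation of
the calibration distribution.  If the conformal guarantee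
`ℙ(Y ≤ Quantile_{1-α'}(ν)) ≥ 1-α'` holds for the ideal measure `ν` at every
level `α' ∈ (0,1)`, and `d_TV(μ,ν) ≤ ε`, then the threshold
`q̂ = Quantile_{1-α}(μ)` computed from the empirical measure `μ` satisfies
`ℙ(Y ≤ q̂) ≥ 1 - α - ε`, provided `α + ε < 1`. -/
theorem coverage_degradation_tv {Ω : Type*} [MeasurableSpace Ω]
    (P : Measure Ω) [IsProbabilityMeasure P] (Y : Ω → ℝ)
    (μ ν : Measure ℝ) [IsProbabilityMeasure μ] [IsProbabilityMeasure ν]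
    (ε α : ℝ) (hε : 0 ≤ ε) (hα : α ∈ Set.Ioo (0 : ℝ) 1) (hαε : α + ε < 1)
    (hTV : ∀ A : Set ℝ, MeasurableSet A → |(μ A).toReal - (ν A).toReal| ≤ ε)
    (hcov : ∀ α' ∈ Set.Ioo (0 : ℝ) 1,
      ENNReal.ofReal (1 - α') ≤
        P {x | Y x ≤ sInf {t : ℝ | 1 - α' ≤ (ν (Set.Iic t)).toReal}}) :
    ENNReal.ofReal (1 - α - ε) ≤
      P {x | Y x ≤ sInf {t : ℝ | 1 - α ≤ (μ (Set.Iic t)).toReal}} := by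
  obtain ⟨hα0, hα1⟩ := hα
  set c : ℝ := 1 - α - ε with hc
  have hc0 : 0 < c := by linarith
  set Sμ : Set ℝ := {t : ℝ | 1 - α ≤ (μ (Set.Iic t)).toReal} with hSμ
  set Sν : Set ℝ := {t : ℝ | 1 - (α + ε) ≤ (ν (Set.Iic t)).toReal} with hSν
  -- Sμ ⊆ Sν
  have hsub : Sμ ⊆ Sν := by
    intro t ht
    have h1 := hTV (Set.Iic t) measurableSet_Iic
    have h2 := abs_le.mp h1
    simp only [hSν, Set.mem_setOf_eq]
    have : (1 : ℝ) - α ≤ (μ (Set.Iic t)).toReal := ht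
    linarith [h2.2]
  -- Sμ nonempty
  have hμne : Sμ.Nonempty := by
    have h := tendsto_measure_Iic_atTop μ
    rw [measure_univ] at h
    have hlt : ENNReal.ofReal (1 - α) < 1 := by
      rw [← ENNReal.ofReal_one]
      exact ENNReal.ofReal_lt_ofReal_iff_of_nonneg (by linarith) |>.mpr (by linarith)
    have := h.eventually_const_le hlt
    obtain ⟨t, ht⟩ := this.exists
    refine ⟨t, ?_⟩
    simp only [hSμ, Set.mem_setOf_eq]
    have := ENNReal.toReal_mono (by simp) ht
    simpa [ENNReal.toReal_ofReal (by linarith : (0:ℝ) ≤ 1 - α)] using this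
  -- Sν bounded below
  have hνbdd : BddBelow Sν := by
    have h := tendsto_measure_Ici_atBot ν
    rw [measure_univ] at h
    have hlt : ENNReal.ofReal (1 - c) < 1 := by
      rw [← ENNReal.ofReal_one]
      exact ENNReal.ofReal_lt_ofReal_iff_of_nonneg (by linarith) |>.mpr (by linarith)
    obtain ⟨s, hs⟩ := (h.eventually_const_lt hlt).exists
    refine ⟨s - 1, fun t ht => ?_⟩
    by_contra hlt'
    push_neg at hlt'
    have hsub2 : Set.Iic t ⊆ Set.Iio s := fun x hx => lt_of_le_of_lt hx (show t < s by linarith)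
    have hcompl : ν (Set.Iio s) = 1 - ν (Set.Ici s) := by
      have := measure_compl (s := Set.Ici s) measurableSet_Ici (measure_ne_top ν _)
      simpa [Set.compl_Ici, measure_univ] using this
    have hIci : 1 - c < (ν (Set.Ici s)).toReal := by
      rw [ENNReal.ofReal_lt_iff_lt_toReal (by linarith) (measure_ne_top ν _)] at hs
      exact hs
    have hIio : (ν (Set.Iio s)).toReal < c := by
      rw [hcompl, ENNReal.toReal_sub_of_le prob_le_one ENNReal.one_ne_top]
      simp only [ENNReal.toReal_one]
      linarith
    have hle : (ν (Set.Iic t)).toReal ≤ (ν (Set.Iio s)).toReal :=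
      ENNReal.toReal_mono (measure_ne_top ν _) (measure_mono hsub2)
    have htmem : 1 - (α + ε) ≤ (ν (Set.Iic t)).toReal := ht
    have : 1 - (α + ε) = c := by ring
    linarith
  -- sInf Sν ≤ sInf Sμ
  have hq : sInf Sν ≤ sInf Sμ := csInf_le_csInf hνbdd hμne hsub
  have hmono : {x | Y x ≤ sInf Sν} ⊆ {x | Y x ≤ sInf Sμ} :=
    fun x hx => le_trans hx hq
  have hcov' := hcov (α + ε) ⟨by linarith, hαε⟩
  calc ENNReal.ofReal (1 - α - ε) = ENNReal.ofReal (1 - (α + ε)) := by ring_nf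
    _ ≤ P {x | Y x ≤ sInf Sν} := hcov'
    _ ≤ P {x | Y x ≤ sInf Sμ} := measure_mono hmono
end
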